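/- Theorem (explicit formula for M). Suppose a_i = Σ_{S ⊆ Fin ℓ, |S| = i} (∏_{j ∈ S} α j) · (∏_{j ∉ S} β j) for 0 ≤ i ≤ ℓ, where α, β : Fin ℓ → R. Then for all n, k ∈ ℕ: if n < t·k then M n k = 0, and if n ≥ t·k then M n k = Σ over all c : Fin ℓ → ℕ with c j ≤ k for every j and Σ_j c j ≤ n − t·k, of choose(k + i, i) · γ^i · ∏_{j} choose(k, c j) · (α j)^(c j) · (β j)^(k − c j), where i = n − t·k − Σ_j c j and choose denotes the binomial coefficient. -/

import Mathlib

open Finset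

/-- The weighted lattice-path matrix `M`:
`M n 0 = ∏_{i=1}^n b i`, `M n k = 0` for `k ≥ 1` and `n < t`, and
`M n k = Σ_{i=0}^{ℓ} (a n i) * M (n-t-i) (k-1) + (b n) * M (n-1) k`
for `n ≥ t`, `k ≥ 1`, where summands with a negative first index vanish. -/
def latticeM {R : Type*} [CommRing R] (t ℓ : ℕ) (a : ℕ → ℕ → R) (b : ℕ → R) :
    ℕ → ℕ → R
  | n, 0 => ∏ i ∈ Finset.Icc 1 n, b i
  | 0, k + 1 => if t = 0 then a 0 0 * latticeM t ℓ a b 0 k else 0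
  | n + 1, k + 1 =>
      if n + 1 < t then 0
      else (∑ i ∈ Finset.range (ℓ + 1),
              if t + i ≤ n + 1 then a (n + 1) i * latticeM t ℓ a b (n + 1 - t - i) k
              else 0)
        + b (n + 1) * latticeM t ℓ a b n (k + 1)
  termination_by n k => (k, n)

/-!
For fixed `k`, the column `n ↦ M n k` has generating function
`X^(t k) (1 - γX)^(-(k+1)) A(X)^k` with `A(X) = Σ_{i ≤ ℓ} a_i X^i`: the recursion in `k` says
`(1 - γX) F_{k+1} = X^t A F_k`. The hypothesis on the `a_i` says exactly that
`A(X) = ∏_j (β_j + α_j X)`, and expanding `A^k` by the binomial theorem in each factor and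
`(1 - γX)^(-(k+1)) = Σ_i C(k+i, i) γ^i X^i` gives the formula.
-/

open PowerSeries

section Series

variable {R : Type*} [CommSemiring R]

noncomputable def stepSeries (ℓ : ℕ) (a : ℕ → R) : R⟦X⟧ :=
  ∑ i ∈ range (ℓ + 1), C (a i) * X ^ i

theorem coeff_X_pow_mul_stepSeries_mul (t ℓ : ℕ) (a : ℕ → R) (T : R⟦X⟧) (n : ℕ) :
    coeff n (X ^ t * stepSeries ℓ a * T) =
      ∑ i ∈ range (ℓ + 1), if t + i ≤ n then a i * coeff (n - t - i) T else 0 := by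
  simp only [stepSeries, mul_sum, sum_mul, map_sum]
  refine sum_congr rfl fun i _ => ?_
  rw [show X ^ t * (C (a i) * X ^ i) * T = C (a i) * (X ^ (t + i) * T) by ring,
    coeff_C_mul, coeff_X_pow_mul', Nat.sub_sub]
  split_ifs <;> simp

/-- The expansion of `(1 - γX)^(-(k+1))`. -/
noncomputable def negBinomialSeries (γ : R) (k : ℕ) : R⟦X⟧ :=
  mk fun i => ((k + i).choose i : R) * γ ^ i

theorem negBinomialSeries_succ (γ : R) (k : ℕ) :
    negBinomialSeries γ (k + 1) =
      negBinomialSeries γ k + C γ * X * negBinomialSeries γ (k + 1) := by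
  ext (_ | n)
  · simp [negBinomialSeries]
  · rw [map_add, mul_assoc, coeff_C_mul, coeff_succ_X_mul]
    simp only [negBinomialSeries, coeff_mk]
    rw [show k + 1 + (n + 1) = k + 1 + n + 1 by omega, show k + (n + 1) = k + 1 + n by omega,
      Nat.choose_succ_succ']
    push_cast
    ring

theorem prod_C_add_C_mul_X {ι : Type*} [Fintype ι] [DecidableEq ι] (α β : ι → R) :
    ∏ j, (C (β j) + C (α j) * X) =
      stepSeries (Fintype.card ι) fun i =>
        ∑ S ∈ powersetCard i univ, (∏ j ∈ S, α j) * ∏ j ∈ Sᶜ, β j := by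
  simp_rw [add_comm (C _)]
  rw [prod_add, sum_powerset, card_univ, stepSeries]
  refine sum_congr rfl fun i _ => ?_
  rw [map_sum, sum_mul]
  refine sum_congr rfl fun S hS => ?_
  rw [← (mem_powersetCard.1 hS).2, compl_eq_univ_sdiff, prod_mul_distrib, prod_const,
    map_mul, map_prod, map_prod]
  ring

theorem coeff_negBinomialSeries_mul_prod_pow {ι : Type*} [Fintype ι] [DecidableEq ι]
    (γ : R) (α β : ι → R) (k m : ℕ) :
    coeff m (negBinomialSeries γ k * (∏ j, (C (β j) + C (α j) * X)) ^ k) =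
      ∑ c ∈ (Fintype.piFinset fun _ : ι => range (k + 1)).filter (fun c => ∑ j, c j ≤ m),
        ((k + (m - ∑ j, c j)).choose (m - ∑ j, c j) : R) * γ ^ (m - ∑ j, c j) *
          ∏ j, (k.choose (c j) : R) * α j ^ c j * β j ^ (k - c j) := by
  have expand : (∏ j, (C (β j) + C (α j) * X)) ^ k =
      ∑ c ∈ Fintype.piFinset fun _ : ι => range (k + 1),
        C (∏ j, (k.choose (c j) : R) * α j ^ c j * β j ^ (k - c j)) * X ^ ∑ j, c j := by
    simp_rw [← prod_pow, add_comm (C _), add_pow]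
    rw [prod_univ_sum]
    refine sum_congr rfl fun c _ => ?_
    rw [map_prod, ← prod_pow_eq_pow_sum, ← prod_mul_distrib]
    refine prod_congr rfl fun j _ => ?_
    simp only [mul_pow, map_mul, map_pow, map_natCast]
    ring
  rw [expand, mul_sum, map_sum, sum_filter]
  refine sum_congr rfl fun c _ => ?_
  rw [mul_left_comm, coeff_C_mul, coeff_mul_X_pow']
  split_ifs
  · simp only [negBinomialSeries, coeff_mk]
    ring
  · rw [mul_zero]

end Series

section LatticeM

variable {R : Type*} [CommRing R]

theorem latticeM_succ_of_lt {t n : ℕ} (ℓ : ℕ) (a : ℕ → ℕ → R) (b : ℕ → R) (k : ℕ)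
    (hn : n < t) : latticeM t ℓ a b n (k + 1) = 0 := by
  cases n with
  | zero => rw [latticeM, if_neg (by omega)]
  | succ n => rw [latticeM, if_pos hn]

theorem latticeM_eq_coeff_of_rec (t ℓ : ℕ) (a : ℕ → R) (γ : R) (S : ℕ → R⟦X⟧)
    (hS₀ : ∀ n, coeff n (S 0) = γ ^ n)
    (hS : ∀ k, S (k + 1) = X ^ t * stepSeries ℓ a * S k + C γ * X * S (k + 1)) (n k : ℕ) :
    latticeM t ℓ (fun _ i => a i) (fun _ => γ) n k = coeff n (S k) := by
  induction k generalizing n with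
  | zero => simp [latticeM, hS₀]
  | succ k ihk =>
    induction n with
    | zero =>
      rw [hS k, map_add, coeff_X_pow_mul_stepSeries_mul, mul_assoc, coeff_C_mul,
        coeff_zero_X_mul, mul_zero, add_zero]
      rcases Nat.eq_zero_or_pos t with rfl | ht
      · rw [latticeM, if_pos rfl, sum_eq_single 0 (fun i _ hi => if_neg (by omega))
          (by simp), if_pos le_rfl, ihk]
      · rw [latticeM_succ_of_lt _ _ _ _ ht, sum_eq_zero fun i _ => if_neg (by omega)]
    | succ n ihn =>
      rw [hS k, map_add, coeff_X_pow_mul_stepSeries_mul, mul_assoc, coeff_C_mul,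
        coeff_succ_X_mul, ← ihn]
      by_cases hnt : n + 1 < t
      · rw [latticeM_succ_of_lt _ _ _ _ hnt, latticeM_succ_of_lt _ _ _ _ (by omega : n < t),
          sum_eq_zero fun i _ => if_neg (by omega), mul_zero, add_zero]
      · rw [latticeM, if_neg hnt]
        simp only [ihk]

theorem latticeM_eq_coeff (t ℓ : ℕ) (a : ℕ → R) (γ : R) (n k : ℕ) :
    latticeM t ℓ (fun _ i => a i) (fun _ => γ) n k =
      coeff n (X ^ (t * k) * (negBinomialSeries γ k * stepSeries ℓ a ^ k)) := by
  refine latticeM_eq_coeff_of_rec t ℓ a γ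
    (fun k => X ^ (t * k) * (negBinomialSeries γ k * stepSeries ℓ a ^ k))
    (fun n => by simp [negBinomialSeries]) (fun k => ?_) n k
  linear_combination (X ^ (t * (k + 1)) * stepSeries ℓ a ^ (k + 1)) * negBinomialSeries_succ γ k

end LatticeM

/-- **Theorem (explicit formula for `M`).**  Suppose the height-independent
step weights factor linearly:
`a i = Σ_{S ⊆ Fin ℓ, |S| = i} (∏_{j ∈ S} α j) · (∏_{j ∉ S} β j)` for
`0 ≤ i ≤ ℓ`.  Then `M n k = 0` for `n < t·k`, and for `n ≥ t·k`,
`M n k = Σ_{c : Fin ℓ → ℕ, c j ≤ k, Σ c j ≤ n - t·k}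
  C(k+i, i) γ^i ∏_j C(k, c j) (α j)^(c j) (β j)^(k - c j)` where
`i = n - t·k - Σ_j c j`. -/
theorem latticeM_explicit_formula {R : Type*} [CommRing R] (t ℓ : ℕ)
    (a : ℕ → R) (γ : R) (α β : Fin ℓ → R)
    (hfact : ∀ i ≤ ℓ, a i =
      ∑ S ∈ Finset.powersetCard i (Finset.univ : Finset (Fin ℓ)),
        (∏ j ∈ S, α j) * ∏ j ∈ Sᶜ, β j)
    (n k : ℕ) :
    (n < t * k → latticeM t ℓ (fun _ i => a i) (fun _ => γ) n k = 0) ∧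
      (t * k ≤ n → latticeM t ℓ (fun _ i => a i) (fun _ => γ) n k =
        ∑ c ∈ (Fintype.piFinset fun _ : Fin ℓ => Finset.range (k + 1)).filter
            (fun c => ∑ j, c j ≤ n - t * k),
          (Nat.choose (k + (n - t * k - ∑ j, c j)) (n - t * k - ∑ j, c j) : R) *
              γ ^ (n - t * k - ∑ j, c j) *
            ∏ j, (Nat.choose k (c j) : R) * α j ^ c j * β j ^ (k - c j)) := by
  have hstep : stepSeries ℓ a = ∏ j, (C (β j) + C (α j) * X) := by
    rw [prod_C_add_C_mul_X, Fintype.card_fin]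
    exact sum_congr rfl fun i hi => by rw [hfact i (Nat.lt_succ_iff.1 (mem_range.1 hi))]
  rw [latticeM_eq_coeff, coeff_X_pow_mul', hstep]
  exact ⟨fun h => if_neg (by omega),
    fun h => by rw [if_pos h, coeff_negBinomialSeries_mul_prod_pow]⟩
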